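/- arXiv:1703.08739 — 9 statements merged into one kernel-verified Lean document; each statement's English description precedes it below -/
import Mathlib

section
/- If G is a k-geodetic digraph with minimum out-degree at least d and order M(d,k) + ε where ε < M(d,k-1), then every vertex of G has out-degree exactly d. -/
/-- Moore bound `M(d,k) = 1 + d + ... + d^k`. -/
def moore (d k : ℕ) : ℕ := ∑ i ∈ Finset.range (k + 1), d ^ i

/-- Moore bound with integer argument, with the convention `M(d,k) = 0` for `k < 0`. -/
def mooreZ (d : ℕ) (j : ℤ) : ℕ := if j < 0 then 0 else moore d j.toNat

/-- Walks of length at most `k` from `u` to `v` in the digraph with arc relation `A`,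
encoded as vertex lists (so a walk of length `≤ k` is a list of length `≤ k+1`). -/
def walksUpTo {V : Type*} (A : V → V → Prop) (k : ℕ) (u v : V) : Set (List V) :=
  {l | l.Chain' A ∧ l.head? = some u ∧ l.getLast? = some v ∧ l.length ≤ k + 1}

/-- A digraph is `k`-geodetic if between any ordered pair of vertices there is at most
one directed walk of length at most `k`. -/
def IsGeodetic {V : Type*} (A : V → V → Prop) (k : ℕ) : Prop :=
  ∀ u v : V, (walksUpTo A k u v).Subsingleton

/-- `v` is reachable from `u` by a directed walk of length at most `k`. -/
def reachIn {V : Type*} (A : V → V → Prop) (k : ℕ) (u v : V) : Prop :=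
  (walksUpTo A k u v).Nonempty

/-- Out-degree of a vertex. -/
noncomputable def outDeg {V : Type*} (A : V → V → Prop) (u : V) : ℕ := {v | A u v}.ncard

/-- In-degree of a vertex. -/
noncomputable def inDeg {V : Type*} (A : V → V → Prop) (v : V) : ℕ := {u | A u v}.ncard

/-- The outlier set `O(u)`: vertices not reachable from `u` within distance `k`. -/
def outlier {V : Type*} (A : V → V → Prop) (k : ℕ) (u : V) : Set V :=
  {v | ¬ reachIn A k u v}

/-!
Let `u` be a vertex of out-degree `δ`. Since every vertex has out-degree at least `d`, there are
at least `δ * d ^ n` walks of length `n + 1` out of `u`. In a `k`-geodetic digraph the walks of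
length at most `k` out of `u` have pairwise distinct endpoints, hence
`1 + δ * M(d, k - 1) ≤ |V| = M(d, k) + ε = 1 + d * M(d, k - 1) + ε`,
and `ε < M(d, k - 1)` forces `δ < d + 1`.
-/

open Finset

lemma moore_succ (d m : ℕ) : moore d (m + 1) = 1 + d * moore d m := by
  simp only [moore, sum_range_succ' (fun i => d ^ i) (m + 1), mul_sum, pow_succ']
  ring

section Walks

variable {V : Type*} [Fintype V] (A : V → V → Prop) [DecidableRel A]

def outNbrs (u : V) : Finset V := {v | A u v}

lemma card_outNbrs (u : V) : (outNbrs A u).card = outDeg A u := by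
  rw [outDeg, ← Set.ncard_coe_finset]
  simp [outNbrs]

variable [DecidableEq V]

/-- Walks with `n` arcs out of `u`, i.e. vertex lists of length `n + 1`. -/
def walksFrom : V → ℕ → Finset (List V)
  | u, 0 => {[u]}
  | u, n + 1 =>
    (outNbrs A u).biUnion fun x => (walksFrom x n).map ⟨List.cons u, List.cons_injective⟩

lemma isWalk_of_mem_walksFrom {u : V} {n : ℕ} {l : List V} (hl : l ∈ walksFrom A u n) :
    l.IsChain A ∧ l.head? = some u ∧ l.length = n + 1 := by
  induction n generalizing u l with
  | zero =>
    rw [walksFrom, mem_singleton] at hl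
    subst hl
    exact ⟨List.isChain_singleton u, rfl, rfl⟩
  | succ n ih =>
    simp only [walksFrom, mem_biUnion, mem_map, Function.Embedding.coeFn_mk] at hl
    obtain ⟨x, hx, l, hl, rfl⟩ := hl
    obtain ⟨hchain, hhead, hlen⟩ := ih hl
    refine ⟨hchain.cons ?_, rfl, by simp [hlen]⟩
    simpa [hhead, outNbrs] using hx

lemma card_walksFrom_succ (u : V) (n : ℕ) :
    (walksFrom A u (n + 1)).card = ∑ x ∈ outNbrs A u, (walksFrom A x n).card := by
  rw [walksFrom, card_biUnion]
  · simp only [card_map]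
  intro x _ y _ hxy
  refine disjoint_left.2 fun l hlx hly => hxy ?_
  simp only [mem_map, Function.Embedding.coeFn_mk] at hlx hly
  obtain ⟨l, hl, rfl⟩ := hlx
  obtain ⟨l', hl', hll'⟩ := hly
  rw [List.cons_injective hll'] at hl'
  exact Option.some_injective _ <|
    (isWalk_of_mem_walksFrom A hl).2.1.symm.trans (isWalk_of_mem_walksFrom A hl').2.1

variable {A}

lemma outDeg_mul_le_card_walksFrom_succ {u : V} {n c : ℕ}
    (h : ∀ x ∈ outNbrs A u, c ≤ (walksFrom A x n).card) :
    outDeg A u * c ≤ (walksFrom A u (n + 1)).card := by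
  rw [card_walksFrom_succ, ← card_outNbrs, ← smul_eq_mul]
  exact card_nsmul_le_sum _ _ _ h

section MinOutDegree

variable {d : ℕ} (hout : ∀ v, d ≤ outDeg A v)
include hout

lemma pow_le_card_walksFrom (u : V) (n : ℕ) : d ^ n ≤ (walksFrom A u n).card := by
  induction n generalizing u with
  | zero => simp [walksFrom]
  | succ n ih =>
    calc d ^ (n + 1) ≤ outDeg A u * d ^ n := by rw [pow_succ']; gcongr; exact hout u
      _ ≤ _ := outDeg_mul_le_card_walksFrom_succ fun x _ => ih x

lemma one_add_outDeg_mul_moore_le (u : V) (m : ℕ) :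
    1 + outDeg A u * moore d m ≤ ∑ n ∈ range (m + 2), (walksFrom A u n).card := by
  rw [sum_range_succ', moore, mul_sum, add_comm 1]
  refine add_le_add (sum_le_sum fun n _ => ?_) (by simp [walksFrom])
  exact outDeg_mul_le_card_walksFrom_succ fun x _ => pow_le_card_walksFrom hout x n

end MinOutDegree

/-- In a `k`-geodetic digraph a walk of length at most `k` out of `u` is determined by its
endpoint. -/
lemma sum_card_walksFrom_le_card {k : ℕ} (hgeo : IsGeodetic A k) (u : V) :
    ∑ n ∈ range (k + 1), (walksFrom A u n).card ≤ Fintype.card V := by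
  have hdisj : (range (k + 1) : Set ℕ).PairwiseDisjoint (walksFrom A u) := by
    intro n _ n' _ hnn'
    refine disjoint_left.2 fun l hl hl' => hnn' ?_
    have := (isWalk_of_mem_walksFrom A hl).2.2
    have := (isWalk_of_mem_walksFrom A hl').2.2
    omega
  rw [← card_biUnion hdisj, ← card_univ]
  refine card_le_card_of_injOn (fun l => l.getLast?.getD u) (fun _ _ => mem_univ _) ?_
  have walk_mem {l : List V} (hl : l ∈ (range (k + 1)).biUnion (walksFrom A u)) :
      l ∈ walksUpTo A k u (l.getLast?.getD u) := by
    obtain ⟨n, hn, hl⟩ := mem_biUnion.1 hl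
    obtain ⟨hchain, hhead, hlen⟩ := isWalk_of_mem_walksFrom A hl
    obtain ⟨t, rfl⟩ : ∃ t, l = u :: t := ⟨l.tail, (List.cons_head?_tail hhead).symm⟩
    exact ⟨hchain, hhead, by rw [List.getLast?_cons]; rfl, by simp at hn; omega⟩
  intro l hl l' hl' hll'
  exact hgeo u _ (walk_mem hl) (by simpa only [hll'] using walk_mem hl')

end Walks

/-- If `G` is a `k`-geodetic digraph with minimum out-degree at least `d`
and order `M(d,k) + ε` with `ε < M(d,k-1)`, then every vertex has out-degree exactly `d`. -/
theorem stmt1 {V : Type*} [Fintype V] (A : V → V → Prop) (d k ε : ℕ)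
    (hgeo : IsGeodetic A k) (hout : ∀ u : V, d ≤ outDeg A u)
    (hcard : Fintype.card V = moore d k + ε)
    (hε : ε < mooreZ d ((k : ℤ) - 1)) :
    ∀ u : V, outDeg A u = d := by
  classical
  intro u
  obtain ⟨m, rfl⟩ : ∃ m, k = m + 1 := by
    cases k with
    | zero => simp [mooreZ] at hε
    | succ m => exact ⟨m, rfl⟩
  have hεm : ε < moore d m := by simpa [mooreZ, not_lt.2 (Int.natCast_nonneg m)] using hε
  have hwalks := (one_add_outDeg_mul_moore_le hout u m).trans (sum_card_walksFrom_le_card hgeo u)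
  rw [hcard, moore_succ] at hwalks
  have : outDeg A u * moore d m < (d + 1) * moore d m := by linarith
  exact le_antisymm (Nat.lt_succ_iff.1 (Nat.lt_of_mul_lt_mul_right this)) (hout u)
end

section
/- In a k-geodetic digraph with out-degree d, if v is a vertex with d^+(v) ≥ d+1, then the number of vertices reachable from v within distance k is at least M(d,k) + M(d,k-1). -/
/-!
From `v`, take `d + 1` distinct first steps and then, at every later vertex, `d` distinct
steps. The resulting walks of length at most `k` are pairwise distinct: one of length `0`
and `(d + 1) d ^ (j - 1)` of each length `1 ≤ j ≤ k`. In a `k`-geodetic digraph distinct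
walks of length at most `k` from `v` end at distinct vertices, so at least
`1 + (d + 1) (1 + d + ⋯ + d ^ (k - 1)) = M(d,k) + M(d,k-1)` vertices are reachable.
-/

open Finset

theorem moore_add_mooreZ_sub_one (d k : ℕ) :
    moore d k + mooreZ d ((k : ℤ) - 1) = 1 + (d + 1) * ∑ i ∈ range k, d ^ i := by
  cases k with
  | zero => simp [moore, mooreZ]
  | succ n =>
    have hZ : mooreZ d ((↑(n + 1) : ℤ) - 1) = moore d n := by simp [mooreZ]
    rw [hZ, moore, moore, sum_range_succ']
    simp only [pow_succ', ← mul_sum, pow_zero]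
    ring

theorem exists_injective_adj_of_le_outDeg {V : Type*} [Finite V] {A : V → V → Prop} {u : V}
    {m : ℕ} (hm : m ≤ outDeg A u) : ∃ f : Fin m → V, Function.Injective f ∧ ∀ i, A u (f i) := by
  obtain ⟨n, ⟨e⟩⟩ := Finite.exists_equiv_fin {w | A u w}
  have hn : n = outDeg A u := by rw [outDeg, ← Nat.card_coe_set_eq, Nat.card_congr e, Nat.card_fin]
  refine ⟨fun i => e.symm (Fin.castLE (hn ▸ hm) i), fun i j h => ?_, fun i => (e.symm _).2⟩
  exact Fin.castLE_injective _ (e.symm.injective (Subtype.ext h))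

section WalkOfChoices

variable {V : Type*} {d : ℕ} (g : V → Fin d → V)

def walkOfChoices : V → List (Fin d) → List V
  | u, [] => [u]
  | u, c :: cs => u :: walkOfChoices (g u c) cs

@[simp]
theorem walkOfChoices_head? (u : V) (cs : List (Fin d)) :
    (walkOfChoices g u cs).head? = some u := by
  cases cs <;> rfl

@[simp]
theorem walkOfChoices_length (u : V) (cs : List (Fin d)) :
    (walkOfChoices g u cs).length = cs.length + 1 := by
  induction cs generalizing u with
  | nil => rfl
  | cons c cs ih => simp [walkOfChoices, ih]

theorem walkOfChoices_isChain {A : V → V → Prop} (hg : ∀ u c, A u (g u c)) (u : V)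
    (cs : List (Fin d)) : (walkOfChoices g u cs).IsChain A := by
  induction cs generalizing u with
  | nil => exact List.isChain_singleton _
  | cons c cs ih => exact (ih _).cons (by simp [hg])

theorem walkOfChoices_injective (hg : ∀ u, Function.Injective (g u)) (u : V) :
    Function.Injective (walkOfChoices g u) := by
  intro cs
  induction cs generalizing u with
  | nil => intro cs' h; simpa using congrArg List.length h
  | cons c cs ih =>
    intro cs' h
    cases cs' with
    | nil => simpa using congrArg List.length h
    | cons c' cs' =>
      simp only [walkOfChoices, List.cons.injEq, true_and] at h
      obtain rfl : c = c' := hg u (by simpa using congrArg List.head? h)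
      rw [ih _ h]

end WalkOfChoices

theorem IsGeodetic.card_le_ncard_reachIn {V ι : Type*} [Finite V] {A : V → V → Prop} {k : ℕ}
    (hgeo : IsGeodetic A k) {v : V} (W : ι → List V) (hW : Function.Injective W)
    (hwalk : ∀ i, ∃ w, W i ∈ walksUpTo A k v w) : Nat.card ι ≤ {w | reachIn A k v w}.ncard := by
  choose e he using hwalk
  have he_inj : Function.Injective e := fun i j h => hW (hgeo v (e j) (h ▸ he i) (he j))
  rw [← Nat.card_coe_set_eq]
  exact Nat.card_le_card_of_injective (fun i => ⟨e i, W i, he i⟩)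
    fun i j h => he_inj (congrArg Subtype.val h)

section MooreTree

variable {V : Type*} {d k : ℕ} {v : V} {first : Fin (d + 1) → V} {g : V → Fin d → V}

/-- `none` indexes the walk of length `0`; `some (a, ⟨i, cs⟩)` the walk of length `i + 1`
with first step `a` and further steps `cs`. -/
abbrev MooreTreeIndex (d k : ℕ) : Type := Option (Fin (d + 1) × Σ i : Fin k, (Fin i → Fin d))

theorem card_mooreTreeIndex (d k : ℕ) :
    Nat.card (MooreTreeIndex d k) = 1 + (d + 1) * ∑ i ∈ range k, d ^ i := by
  simp [Fintype.card_sigma, Fin.sum_univ_eq_sum_range (d ^ ·), add_comm]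

variable (v first g) in
def mooreTreeWalk : MooreTreeIndex d k → List V
  | none => [v]
  | some (a, ⟨_, cs⟩) => v :: walkOfChoices g (first a) (List.ofFn cs)

theorem mooreTreeWalk_injective (hfirst : Function.Injective first)
    (hg : ∀ u, Function.Injective (g u)) :
    Function.Injective (mooreTreeWalk (k := k) v first g) := by
  rintro (_ | ⟨a, i, cs⟩) (_ | ⟨a', i', cs'⟩) h
  · rfl
  all_goals simp only [mooreTreeWalk, List.cons.injEq, true_and] at h
  · simpa using congrArg List.length h
  · simpa using congrArg List.length h
  · obtain rfl : a = a' := hfirst (by simpa using congrArg List.head? h)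
    have hcs := List.ofFn_inj'.mp (walkOfChoices_injective g hg _ h)
    obtain rfl : i = i' := Fin.ext (congrArg Sigma.fst hcs)
    obtain rfl : cs = cs' := eq_of_heq (Sigma.mk.inj hcs).2
    rfl

theorem mooreTreeWalk_mem_walksUpTo {A : V → V → Prop} (hfirst : ∀ a, A v (first a))
    (hg : ∀ u c, A u (g u c)) (x : MooreTreeIndex d k) :
    ∃ w, mooreTreeWalk v first g x ∈ walksUpTo A k v w := by
  rcases x with _ | ⟨a, i, cs⟩
  · exact ⟨v, List.isChain_singleton _, rfl, rfl, by simp [mooreTreeWalk]⟩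
  · refine ⟨_, ?_, rfl, List.getLast?_eq_some_getLast (List.cons_ne_nil _ _), ?_⟩
    · exact (walkOfChoices_isChain g hg _ _).cons (by simp [hfirst])
    · simp [mooreTreeWalk, i.2]

end MooreTree

/-- In a `k`-geodetic digraph with out-degree `d`, if `v` is a vertex with
`d⁺(v) ≥ d+1`, then the number of vertices reachable from `v` within distance `k` is at
least `M(d,k) + M(d,k-1)`. -/
theorem stmt2 {V : Type*} [Fintype V] (A : V → V → Prop) (d k : ℕ)
    (hgeo : IsGeodetic A k) (hout : ∀ u : V, d ≤ outDeg A u)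
    (v : V) (hv : d + 1 ≤ outDeg A v) :
    moore d k + mooreZ d ((k : ℤ) - 1) ≤ {w | reachIn A k v w}.ncard := by
  choose g hg_inj hg_adj using fun u => exists_injective_adj_of_le_outDeg (hout u)
  obtain ⟨first, hfirst_inj, hfirst_adj⟩ := exists_injective_adj_of_le_outDeg hv
  rw [moore_add_mooreZ_sub_one, ← card_mooreTreeIndex]
  exact hgeo.card_le_ncard_reachIn _ (mooreTreeWalk_injective hfirst_inj hg_inj)
    (mooreTreeWalk_mem_walksUpTo hfirst_adj hg_adj)
end

section
/- Let G be an out-regular (degree d) k-geodetic digraph of order M(d,k)+ε, so every vertex u has an outlier set O(u) of exactly ε vertices not reachable from u within distance k. Then every vertex v of in-degree less than d belongs to O(w) for some out-neighbour w of any vertex u; that is, S ⊆ ⋂_{u∈V(G)} O(N^+(u)), where S is the set of vertices of in-degree < d. -/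
/-!
If every out-neighbour `w` of `u` reached `v` within distance `k`, prepending the arc `u → w`
would give a walk of length `≤ k + 1` from `u` to `v`, whose second-to-last vertex is an
in-neighbour of `v` reached from `u` within distance `k`. By `k`-geodecity that walk from `u`
is unique, so distinct `w` give distinct in-neighbours, and `d = d⁺(u) ≤ d⁻(v)`.
-/

section Walks

variable {V : Type*} {A : V → V → Prop} {k : ℕ}

lemma exists_walksUpTo_append_of_walksUpTo {u w v : V} {l : List V} (huw : A u w)
    (hl : l ∈ walksUpTo A k w v) :
    ∃ x p, A x v ∧ p ∈ walksUpTo A k u x ∧ p ++ [v] = u :: l := by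
  obtain ⟨hchain, hhead, hlast, hlen⟩ := hl
  have hsplit : l.dropLast ++ [v] = l :=
    List.dropLast_append_getLast? v hlast
  have hchain' : List.IsChain A ((u :: l.dropLast) ++ [v]) := by
    rw [List.cons_append, hsplit, List.isChain_cons, hhead]
    exact ⟨by simpa using huw, hchain⟩
  obtain ⟨hpchain, -, hlast_arc⟩ := List.isChain_append.mp hchain'
  obtain ⟨x, hx⟩ : ∃ x, (u :: l.dropLast).getLast? = some x :=
    Option.isSome_iff_exists.mp (by simp)
  refine ⟨x, u :: l.dropLast, hlast_arc x hx v rfl, ⟨hpchain, rfl, hx, ?_⟩, ?_⟩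
  · have : l.length ≠ 0 := by rintro h; simp [List.length_eq_zero_iff.mp h] at hhead
    simp only [List.length_cons, List.length_dropLast]
    omega
  · rw [List.cons_append, hsplit]

theorem outDeg_le_inDeg_of_forall_reachIn (hgeo : IsGeodetic A k) {u v : V}
    (hfin : {x | A x v}.Finite) (hreach : ∀ w, A u w → reachIn A k w v) :
    outDeg A u ≤ inDeg A v := by
  have hpred : ∀ w ∈ {w | A u w}, ∃ x, A x v ∧ ∃ l p, l ∈ walksUpTo A k w v ∧
      p ∈ walksUpTo A k u x ∧ p ++ [v] = u :: l := by
    intro w huw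
    obtain ⟨l, hl⟩ := hreach w huw
    obtain ⟨x, p, hxv, hp, hsplit⟩ := exists_walksUpTo_append_of_walksUpTo huw hl
    exact ⟨x, hxv, l, p, hl, hp, hsplit⟩
  choose! f hfv l p hl hp hsplit using hpred
  refine Set.ncard_le_ncard_of_injOn f hfv (fun w₁ h₁ w₂ h₂ hf => ?_) hfin
  have hp_eq : p w₁ = p w₂ := hgeo u (f w₂) (hf ▸ hp w₁ h₁) (hp w₂ h₂)
  have hl_eq : l w₁ = l w₂ :=
    List.cons_injective (a := u) (by rw [← hsplit w₁ h₁, ← hsplit w₂ h₂, hp_eq])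
  have hhead₁ := (hl w₁ h₁).2.1
  rw [hl_eq, (hl w₂ h₂).2.1] at hhead₁
  exact (Option.some_injective _ hhead₁).symm

end Walks

theorem stmt3_general {V : Type*} [Fintype V] (A : V → V → Prop) (d k : ℕ)
    (hgeo : IsGeodetic A k) (hout : ∀ u : V, outDeg A u = d) :
    ∀ v : V, inDeg A v < d → ∀ u : V, ∃ w : V, A u w ∧ v ∈ outlier A k w := by
  intro v hv u
  by_contra! hreach
  refine hv.not_ge (hout u ▸ outDeg_le_inDeg_of_forall_reachIn hgeo (Set.toFinite _) ?_)
  exact fun w huw => not_not.mp (hreach w huw)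

/-- In an out-regular degree-`d` `k`-geodetic digraph of order `M(d,k)+ε`,
every vertex `v` of in-degree `< d` is an outlier of some out-neighbour of every vertex `u`;
that is, `S ⊆ ⋂_{u} O(N⁺(u))`. -/
theorem stmt3 {V : Type*} [Fintype V] (A : V → V → Prop) (d k ε : ℕ)
    (hgeo : IsGeodetic A k) (hout : ∀ u : V, outDeg A u = d)
    (hcard : Fintype.card V = moore d k + ε) :
    ∀ v : V, inDeg A v < d → ∀ u : V, ∃ w : V, A u w ∧ v ∈ outlier A k w :=
  stmt3_general A d k hgeo hout
end

section
/- Let G be an out-regular (degree d) k-geodetic digraph of order M(d,k)+ε with outlier sets O(u) of size ε. Then every vertex v' of in-degree greater than d is an out-neighbour of some outlier of every vertex; that is, S' ⊆ ⋂_{u∈V(G)} N^+(O(u)), where S' is the set of vertices of in-degree > d. -/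
/-! Fix `u` and suppose every in-neighbour `x` of `v` lies within distance `k` of `u`, via a walk
`l_x`. The walk `l_x ++ [v]` leaves `u` through some out-neighbour `w_x`, and its tail is a walk
of length `≤ k` from `w_x` to `v`. By `k`-geodecity `w_x` determines this tail, hence `l_x` and
`x`; so `x ↦ w_x` injects the in-neighbourhood of `v` into the out-neighbourhood of `u`, and
`inDeg v ≤ outDeg u`. Hence a vertex of in-degree `> d` has an in-neighbour in `O(u)`. -/

section Geodetic

variable {V : Type*} {A : V → V → Prop} {k : ℕ}

lemma exists_adj_tail_append_mem_walksUpTo {u x v : V} {l : List V}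
    (hl : l ∈ walksUpTo A k u x) (hxv : A x v) :
    ∃ w, A u w ∧ (l ++ [v]).tail ∈ walksUpTo A k w v := by
  obtain ⟨hchain, hhead, hlast, hlen⟩ := hl
  obtain ⟨t, rfl⟩ := List.head?_eq_some_iff.mp hhead
  obtain ⟨w, s, hws⟩ : ∃ w s, t ++ [v] = w :: s := List.exists_cons_of_ne_nil (by simp)
  have hchain' : List.IsChain A (u :: w :: s) := by
    rw [← hws, ← List.cons_append]
    refine hchain.append (List.isChain_singleton v) fun a ha b hb => ?_
    simp only [hlast, List.head?_cons, Option.mem_def, Option.some.injEq] at ha hb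
    exact ha ▸ hb ▸ hxv
  rw [List.isChain_cons_cons] at hchain'
  refine ⟨w, hchain'.1, ?_⟩
  simp only [List.cons_append, List.tail_cons, hws]
  refine ⟨hchain'.2, rfl, ?_, ?_⟩
  · rw [← hws, List.getLast?_append]; simp
  · rw [← hws]
    simpa using hlen

lemma eq_of_tail_append_eq {u x₁ x₂ v : V} {l₁ l₂ : List V}
    (h₁ : l₁ ∈ walksUpTo A k u x₁) (h₂ : l₂ ∈ walksUpTo A k u x₂)
    (htail : (l₁ ++ [v]).tail = (l₂ ++ [v]).tail) : x₁ = x₂ := by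
  obtain ⟨-, hhead₁, hlast₁, -⟩ := h₁
  obtain ⟨-, hhead₂, hlast₂, -⟩ := h₂
  have hl : l₁ = l₂ := by
    cases l₁ <;> cases l₂ <;> simp_all
  simpa [hl, hlast₂] using hlast₁.symm

theorem inDeg_le_outDeg_of_forall_reachIn [Finite V] (hgeo : IsGeodetic A k) {u v : V}
    (hreach : ∀ x, A x v → reachIn A k u x) : inDeg A v ≤ outDeg A u := by
  choose! l hl using hreach
  choose! f hf using fun x hx => exists_adj_tail_append_mem_walksUpTo (hl x hx) hx
  refine Set.ncard_le_ncard_of_injOn f (fun x hx => (hf x hx).1) ?_ (Set.toFinite _)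
  intro x₁ hx₁ x₂ hx₂ hf₁₂
  have h₂ := (hf x₂ hx₂).2
  rw [← hf₁₂] at h₂
  exact eq_of_tail_append_eq (hl x₁ hx₁) (hl x₂ hx₂) (hgeo _ _ (hf x₁ hx₁).2 h₂)

end Geodetic

theorem stmt4_general {V : Type*} [Fintype V] (A : V → V → Prop) (d k : ℕ)
    (hgeo : IsGeodetic A k) (hout : ∀ u : V, outDeg A u = d) :
    ∀ v' : V, d < inDeg A v' → ∀ u : V, ∃ x : V, x ∈ outlier A k u ∧ A x v' := by
  intro v' hv' u
  by_contra! hnone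
  have hle := inDeg_le_outDeg_of_forall_reachIn hgeo fun x hx => not_not.mp fun h => hnone x h hx
  rw [hout] at hle
  omega

/-- In an out-regular degree-`d` `k`-geodetic digraph of order `M(d,k)+ε`,
every vertex `v'` of in-degree `> d` is an out-neighbour of some outlier of every vertex;
that is, `S' ⊆ ⋂_{u} N⁺(O(u))`. -/
theorem stmt4 {V : Type*} [Fintype V] (A : V → V → Prop) (d k ε : ℕ)
    (hgeo : IsGeodetic A k) (hout : ∀ u : V, outDeg A u = d)
    (hcard : Fintype.card V = moore d k + ε) :
    ∀ v' : V, d < inDeg A v' → ∀ u : V, ∃ x : V, x ∈ outlier A k u ∧ A x v' :=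
  stmt4_general A d k hgeo hout
end

section
/- Let G be an out-regular degree-d k-geodetic digraph of order M(d,k)+ε. If some vertex v' has in-degree exactly d+ε, then for every vertex u, the outlier set O(u) is contained in N^-(v'). -/
/-!
By geodeticity the `d ^ j` walks of length `j ≤ k` leaving `u` end at pairwise distinct
vertices, so at least `M(d,k)` vertices are reachable from `u` and `|O(u)| ≤ ε`.
An in-neighbour `w` of `v'` reachable from `u` yields a walk `u → x → ⋯ → w → v'` whose part
from `x` to `v'` has length at most `k`; by geodeticity `x` determines `w`, so at most `d`
in-neighbours of `v'` are reachable from `u`. Hence at least `ε` in-neighbours of `v'` lie in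
`O(u)`, and as `|O(u)| ≤ ε` they exhaust it.
-/

section

variable {V : Type*} {A : V → V → Prop} {k : ℕ}

section WalkCount

variable [Fintype V] [DecidableEq V] [DecidableRel A]

variable (A) in
/-- Walks of length exactly `n` leaving `u`, stored in reverse order (current vertex first). -/
def revWalksFrom (u : V) : ℕ → Finset (List V)
  | 0 => {[u]}
  | n + 1 => (revWalksFrom u n).biUnion fun l =>
      (Finset.univ.filter (A (l.headD u))).image (· :: l)

theorem length_getLast?_isChain_of_mem_revWalksFrom {u : V} :
    ∀ {n : ℕ} {l : List V}, l ∈ revWalksFrom A u n →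
      l.length = n + 1 ∧ l.getLast? = some u ∧ l.IsChain (flip A)
  | 0, l, hl => by
    rw [revWalksFrom, Finset.mem_singleton] at hl
    exact hl ▸ ⟨rfl, rfl, List.isChain_singleton u⟩
  | n + 1, l, hl => by
    simp only [revWalksFrom, Finset.mem_biUnion, Finset.mem_image, Finset.mem_filter] at hl
    obtain ⟨l', hl', x, ⟨-, hx⟩, rfl⟩ := hl
    obtain ⟨hlen, hlast, hchain⟩ := length_getLast?_isChain_of_mem_revWalksFrom hl'
    obtain ⟨y, t, rfl⟩ := List.exists_cons_of_length_eq_add_one hlen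
    refine ⟨by simpa using hlen, ?_, List.isChain_cons_cons.mpr ⟨hx, hchain⟩⟩
    rwa [List.getLast?_cons_cons]

theorem reverse_mem_walksUpTo_of_mem_revWalksFrom {u : V} {n : ℕ} {l : List V}
    (hl : l ∈ revWalksFrom A u n) (hn : n ≤ k) :
    l.reverse ∈ walksUpTo A k u (l.headD u) := by
  obtain ⟨hlen, hlast, hchain⟩ := length_getLast?_isChain_of_mem_revWalksFrom hl
  obtain ⟨y, t, rfl⟩ := List.exists_cons_of_length_eq_add_one hlen
  refine ⟨List.isChain_reverse.mpr hchain, List.head?_reverse ▸ hlast, by simp, ?_⟩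
  simp only [List.length_reverse, List.length_cons] at hlen ⊢
  omega

theorem card_revWalksFrom {d : ℕ} (hout : ∀ w, outDeg A w = d) (u : V) :
    ∀ n, (revWalksFrom A u n).card = d ^ n
  | 0 => rfl
  | n + 1 => by
    have hdisj : (revWalksFrom A u n : Set (List V)).PairwiseDisjoint fun l =>
        (Finset.univ.filter (A (l.headD u))).image (· :: l) := by
      intro l₁ _ l₂ _ hne
      simp only [Function.onFun, Finset.disjoint_left, Finset.mem_image]
      rintro _ ⟨x, -, rfl⟩ ⟨y, -, hyx⟩
      exact hne (List.cons.inj hyx).2.symm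
    rw [revWalksFrom, Finset.card_biUnion hdisj, pow_succ, ← card_revWalksFrom hout u n,
      ← smul_eq_mul, ← Finset.sum_const]
    refine Finset.sum_congr rfl fun l _ => ?_
    rw [Finset.card_image_of_injective _ fun _ _ h => (List.cons.inj h).1,
      ← hout (l.headD u), outDeg, ← Set.ncard_coe_finset, Finset.coe_filter_univ]

end WalkCount

theorem moore_le_ncard_reachIn [Fintype V] {d : ℕ} (hgeo : IsGeodetic A k)
    (hout : ∀ w, outDeg A w = d) (u : V) : moore d k ≤ {v | reachIn A k u v}.ncard := by
  classical
  let W := (Finset.range (k + 1)).biUnion (revWalksFrom A u)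
  have hW : ∀ l ∈ W, l.reverse ∈ walksUpTo A k u (l.headD u) := by
    intro l hl
    obtain ⟨n, hn, hl⟩ := Finset.mem_biUnion.mp hl
    exact reverse_mem_walksUpTo_of_mem_revWalksFrom hl
      (Nat.lt_succ_iff.mp (Finset.mem_range.mp hn))
  have hdisj : (Finset.range (k + 1) : Set ℕ).PairwiseDisjoint (revWalksFrom A u) := by
    intro m _ n _ hmn
    refine Finset.disjoint_left.mpr fun l hm hn => hmn ?_
    have := (length_getLast?_isChain_of_mem_revWalksFrom hm).1
    have := (length_getLast?_isChain_of_mem_revWalksFrom hn).1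
    omega
  have hinj : Set.InjOn (fun l => l.headD u) (W : Set (List V)) := by
    intro l₁ h₁ l₂ h₂ heq
    have h := hW l₁ h₁
    rw [show l₁.headD u = l₂.headD u from heq] at h
    exact List.reverse_injective (hgeo u _ h (hW l₂ h₂))
  have hmaps : ∀ l ∈ (W : Set (List V)), l.headD u ∈ {v | reachIn A k u v} :=
    fun l hl => ⟨_, hW l hl⟩
  calc moore d k = W.card := by
        rw [moore, Finset.card_biUnion hdisj]
        exact Finset.sum_congr rfl fun n _ => (card_revWalksFrom hout u n).symm
    _ ≤ {v | reachIn A k u v}.ncard := Set.ncard_coe_finset W ▸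
        Set.ncard_le_ncard_of_injOn _ hmaps hinj (Set.toFinite _)

theorem exists_arc_walk_of_reachIn {u v w : V} (hw : reachIn A k u w) (hwv : A w v) :
    ∃ x m, A u x ∧ m ++ [v] ∈ walksUpTo A k x v ∧ (u :: m).getLast? = some w := by
  obtain ⟨_ | ⟨a, m⟩, hchain, hhead, hlast, hlen⟩ := hw
  · cases hhead
  obtain rfl : u = a := (Option.some.inj hhead).symm
  obtain ⟨x, s, hxs⟩ := List.exists_cons_of_ne_nil (List.concat_ne_nil v m)
  have hchain' : (u :: x :: s).IsChain A := by
    rw [← hxs, ← List.cons_append]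
    exact List.isChain_append.mpr ⟨hchain, List.isChain_singleton v,
      fun a ha b hb => by cases hlast.symm.trans ha; cases hb; exact hwv⟩
  refine ⟨x, m, (List.isChain_cons_cons.mp hchain').1, ?_, hlast⟩
  rw [hxs]
  refine ⟨(List.isChain_cons_cons.mp hchain').2, rfl, hxs ▸ List.getLast?_concat, ?_⟩
  have := congrArg List.length hxs
  simp only [List.length_append, List.length_cons, List.length_nil] at this hlen ⊢
  omega

theorem ncard_inNbrs_inter_reachIn_le [Finite V] (hgeo : IsGeodetic A k) (u v : V) :
    ({w | A w v} ∩ {w | reachIn A k u w}).ncard ≤ outDeg A u := by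
  have key : ∀ w ∈ {w | A w v} ∩ {w | reachIn A k u w},
      ∃ x m, A u x ∧ m ++ [v] ∈ walksUpTo A k x v ∧ (u :: m).getLast? = some w :=
    fun w hw => exists_arc_walk_of_reachIn hw.2 hw.1
  choose! x m hux hwalk hlast using key
  refine Set.ncard_le_ncard_of_injOn x hux ?_ (Set.toFinite _)
  intro w₁ h₁ w₂ h₂ hx
  have h := hwalk w₁ h₁
  rw [show x w₁ = x w₂ from hx] at h
  have hm : m w₁ = m w₂ := List.append_cancel_right (hgeo _ v h (hwalk w₂ h₂))
  exact Option.some.inj ((hlast w₁ h₁).symm.trans (hm ▸ hlast w₂ h₂))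

end

/-- In an out-regular degree-`d` `k`-geodetic digraph of order `M(d,k)+ε`,
if some vertex `v'` has in-degree exactly `d+ε`, then every outlier set is contained in
`N⁻(v')`. -/
theorem stmt8 {V : Type*} [Fintype V] (A : V → V → Prop) (d k ε : ℕ)
    (hgeo : IsGeodetic A k) (hout : ∀ u : V, outDeg A u = d)
    (hcard : Fintype.card V = moore d k + ε)
    (v' : V) (hv' : inDeg A v' = d + ε) :
    ∀ u : V, outlier A k u ⊆ {v : V | A v v'} := by
  intro u
  have hmoore := moore_le_ncard_reachIn hgeo hout u
  have hreach := ncard_inNbrs_inter_reachIn_le hgeo u v'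
  set R := {w | reachIn A k u w}
  have hO : (outlier A k u).ncard ≤ ε := by
    have hsum := Set.ncard_add_ncard_compl R
    rw [Nat.card_eq_fintype_card, hcard] at hsum
    change Rᶜ.ncard ≤ ε
    omega
  have hsplit := Set.ncard_inter_add_ncard_sdiff_eq_ncard {w | A w v'} R
  rw [hout u] at hreach
  rw [inDeg] at hv'
  have hdiff : {w | A w v'} \ R = outlier A k u :=
    Set.eq_of_subset_of_ncard_le (fun w hw => hw.2) (by omega)
  exact hdiff ▸ fun w hw => hw.1
end

section
/- There is no k-geodetic digraph with minimum out-degree 2, order M(2,k)+2, and in-degree sequence (1,1,1,1,2,...,2,4,4) for k ≥ 2. -/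
/-!
Write `D` for the four vertices of in-degree one. In a `k`-geodetic digraph the in-balls of
radius `j` around the in-neighbours of a vertex `w` are pairwise disjoint and miss `w`, so the
in-ball of radius `j + 1` around `w` has the Moore size `2 ^ (j + 2) - 1`, up to a penalty for each
vertex of `D` it contains. For a vertex `x` of in-degree four the in-balls of radius `k - 1` around
its in-neighbours are disjoint subsets of `V \ {x}`, a set of size `2 ^ (k + 1)`; the penalties
leave no slack, so the in-neighbours of `x` are exactly `D` and every vertex reaches `x` within
`k`. For the two vertices `x ≠ x'` of in-degree four, `x'` then reaches some `w ∈ D` within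
`k - 1` with `w → x`; but also `w → x'`, closing a cycle of length at most `k` through `x'`.
-/

section Digraph

variable {V : Type*} {A : V → V → Prop} {j k : ℕ} {u w z : V} {D : Set V}

def inBall (A : V → V → Prop) (j : ℕ) (w : V) : Set V := {u | reachIn A j u w}

lemma singleton_mem_walksUpTo (w : V) : [w] ∈ walksUpTo A j w w :=
  ⟨List.isChain_singleton w, rfl, rfl, by simp⟩

lemma ne_nil_of_mem_walksUpTo {l : List V} (hl : l ∈ walksUpTo A j u w) : l ≠ [] := by
  rintro rfl
  simp [walksUpTo] at hl

lemma walksUpTo_mono {j' : ℕ} (h : j ≤ j') : walksUpTo A j u w ⊆ walksUpTo A j' u w :=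
  fun _ ⟨hc, hh, hl, hlen⟩ => ⟨hc, hh, hl, by omega⟩

lemma concat_mem_walksUpTo {l : List V} (hl : l ∈ walksUpTo A j u z) (hzw : A z w) :
    l ++ [w] ∈ walksUpTo A (j + 1) u w := by
  obtain ⟨hc, hh, hlast, hlen⟩ := hl
  have hne : l ≠ [] := by rintro rfl; simp at hh
  refine ⟨List.isChain_append.2 ⟨hc, List.isChain_singleton w, ?_⟩, ?_, by simp, by simpa⟩
  · simp_all
  · rwa [List.head?_append_of_ne_nil _ hne]

lemma mem_inBall_self (j : ℕ) (w : V) : w ∈ inBall A j w :=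
  ⟨[w], singleton_mem_walksUpTo w⟩

lemma inBall_subset_of_adj (hzw : A z w) : inBall A j z ⊆ inBall A (j + 1) w :=
  fun _ ⟨l, hl⟩ => ⟨l ++ [w], concat_mem_walksUpTo hl hzw⟩

lemma mem_inBall_succ_iff : u ∈ inBall A (j + 1) w ↔ u = w ∨ ∃ z, A z w ∧ u ∈ inBall A j z := by
  refine ⟨?_, ?_⟩
  · rintro ⟨l, hc, hh, hlast, hlen⟩
    obtain ⟨l', b, rfl⟩ := (List.eq_nil_or_concat' l).resolve_left (by rintro rfl; simp at hh)
    obtain rfl : w = b := by simpa using hlast.symm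
    rcases List.eq_nil_or_concat' l' with rfl | ⟨l'', z, rfl⟩
    · simp_all
    · refine Or.inr ⟨z, ?_, l'' ++ [z], ?_⟩
      · exact (List.isChain_append.1 hc).2.2 z (by simp) w (by simp)
      · refine ⟨(List.isChain_append.1 hc).1, ?_, by simp, by simp at hlen ⊢; omega⟩
        rwa [List.head?_append_of_ne_nil _ (by simp)] at hh
  · rintro (rfl | ⟨z, hzw, hu⟩)
    · exact mem_inBall_self _ _
    · exact inBall_subset_of_adj hzw hu

lemma notMem_inBall_of_adj (hgeo : IsGeodetic A k) (hj : j + 1 ≤ k) (hzw : A z w) :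
    w ∉ inBall A j z := by
  rintro ⟨l, hl⟩
  have hcycle := hgeo w w (walksUpTo_mono hj (concat_mem_walksUpTo hl hzw))
    (singleton_mem_walksUpTo w)
  have := congrArg List.length hcycle
  simp only [List.length_append, List.length_singleton, Nat.add_eq_right,
    List.length_eq_zero_iff] at this
  exact ne_nil_of_mem_walksUpTo hl this

lemma disjoint_inBall_of_adj (hgeo : IsGeodetic A k) (hj : j + 1 ≤ k) {z' : V}
    (hzw : A z w) (hz'w : A z' w) (hne : z ≠ z') : Disjoint (inBall A j z) (inBall A j z') := by
  refine Set.disjoint_left.2 fun u ⟨l, hl⟩ ⟨l', hl'⟩ => hne ?_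
  have : l = l' := List.append_cancel_right <| hgeo u w
    (walksUpTo_mono hj (concat_mem_walksUpTo hl hzw))
    (walksUpTo_mono hj (concat_mem_walksUpTo hl' hz'w))
  simpa [this, hl'.2.2.1] using hl.2.2.1.symm

variable [Finite V]

open Classical in
lemma ite_add_sum_ncard_inBall_inter_le (hgeo : IsGeodetic A k) (hj : j + 1 ≤ k) (D : Set V)
    {Z : Finset V} (hZ : ∀ z ∈ Z, A z w) :
    (if w ∈ D then 1 else 0) + ∑ z ∈ Z, (inBall A j z ∩ D).ncard
      ≤ (inBall A (j + 1) w ∩ D).ncard := by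
  have : Fintype V := Fintype.ofFinite V
  set U := Z.biUnion fun z => (inBall A j z ∩ D).toFinset
  have hU : U.card = ∑ z ∈ Z, (inBall A j z ∩ D).ncard := by
    rw [Finset.card_biUnion]
    · simp_rw [Set.ncard_eq_toFinset_card']
    · intro z hz z' hz' hne
      exact Set.disjoint_toFinset.2 <|
        (disjoint_inBall_of_adj hgeo hj (hZ z hz) (hZ z' hz') hne).mono
          Set.inter_subset_left Set.inter_subset_left
  have hwU : w ∉ U := by
    simp only [U, Finset.mem_biUnion, Set.mem_toFinset, not_exists, not_and]
    exact fun z hz hw => notMem_inBall_of_adj hgeo hj (hZ z hz) hw.1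
  have hUsub : U ⊆ (inBall A (j + 1) w ∩ D).toFinset := by
    simp only [U, Finset.biUnion_subset, Set.toFinset_subset_toFinset]
    exact fun z hz => Set.inter_subset_inter_left D (inBall_subset_of_adj (hZ z hz))
  rw [← hU, Set.ncard_eq_toFinset_card']
  split_ifs with hwD
  · rw [add_comm, ← Finset.card_insert_of_notMem hwU]
    exact Finset.card_le_card (Finset.insert_subset (by simp [hwD, mem_inBall_self]) hUsub)
  · simpa using Finset.card_le_card hUsub

lemma add_sum_ncard_inBall_le (hgeo : IsGeodetic A k) (hj : j + 1 ≤ k) {Z : Finset V}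
    (hZ : ∀ z ∈ Z, A z w) : 1 + ∑ z ∈ Z, (inBall A j z).ncard ≤ (inBall A (j + 1) w).ncard := by
  simpa using ite_add_sum_ncard_inBall_inter_le hgeo hj Set.univ hZ

open Classical in
lemma exists_finset_adj (hD : ∀ w ∈ D, 1 ≤ inDeg A w) (hDc : ∀ w ∉ D, 2 ≤ inDeg A w) (w : V) :
    ∃ Z : Finset V, (∀ z ∈ Z, A z w) ∧ 2 ≤ Z.card + if w ∈ D then 1 else 0 := by
  refine ⟨(Set.toFinite {u | A u w}).toFinset, fun z hz => by simpa using hz, ?_⟩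
  rw [← Set.ncard_eq_toFinset_card]
  split_ifs with hw
  · exact Nat.add_le_add_right (hD w hw) 1
  · exact hDc w hw

open Classical in
/-- A vertex `u ∈ D` at distance `i ≤ j` from `w` costs the `2 ^ (j + 1 - i) - 1` vertices of
a missing branch of the Moore tree of depth `j + 1`; this is at most `2 ^ (j + 1) - 2`, except for
`u = w`, which costs one more. -/
theorem pow_le_one_add_ncard_inBall (hgeo : IsGeodetic A k) (hD : ∀ w ∈ D, 1 ≤ inDeg A w)
    (hDc : ∀ w ∉ D, 2 ≤ inDeg A w) (hj : j + 1 ≤ k) (w : V) :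
    2 ^ (j + 2) ≤ 1 + (inBall A (j + 1) w).ncard + (2 ^ (j + 1) - 2) * (inBall A j w ∩ D).ncard
      + (if w ∈ D then 1 else 0) := by
  induction j generalizing w with
  | zero =>
    obtain ⟨Z, hZ, hcard⟩ := exists_finset_adj hD hDc w
    have hball := add_sum_ncard_inBall_le hgeo hj hZ
    have hone : Z.card • 1 ≤ ∑ z ∈ Z, (inBall A 0 z).ncard := Finset.card_nsmul_le_sum _ _ _
      fun z _ => (Set.ncard_pos (Set.toFinite _)).2 ⟨z, mem_inBall_self 0 z⟩
    simp only [smul_eq_mul, mul_one] at hone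
    simp only [zero_add, pow_one, tsub_self, zero_mul, add_zero] at hball ⊢
    omega
  | succ j ih =>
    obtain ⟨Z, hZ, hcard⟩ := exists_finset_adj hD hDc w
    obtain ⟨c, hc⟩ : ∃ c, 2 ^ (j + 1) = c + 2 :=
      ⟨2 ^ (j + 1) - 2, by have := Nat.pow_le_pow_right two_pos (Nat.le_add_left 1 j); omega⟩
    have hpow : 2 ^ (j + 2) = 2 * c + 4 := by rw [pow_succ, hc]; ring
    have hpow' : 2 ^ (j + 3) = 4 * c + 8 := by rw [pow_succ, hpow]; ring
    have hz : ∀ z ∈ Z, 2 * c + 4 ≤ 1 + (inBall A (j + 1) z).ncard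
        + (c + 1) * (inBall A j z ∩ D).ncard := by
      intro z _
      have hι : (if z ∈ D then 1 else 0) ≤ (inBall A j z ∩ D).ncard := by
        split_ifs with hzD
        · exact (Set.ncard_pos (Set.toFinite _)).2 ⟨z, mem_inBall_self j z, hzD⟩
        · exact Nat.zero_le _
      have := ih (by omega) z
      rw [hc, Nat.add_sub_cancel, hpow] at this
      linarith
    have hsum := Finset.card_nsmul_le_sum _ _ _ hz
    simp only [Finset.sum_const, smul_eq_mul, Finset.sum_add_distrib, ← Finset.mul_sum,
      mul_one] at hsum
    have hS := add_sum_ncard_inBall_le hgeo hj hZ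
    have ht := ite_add_sum_ncard_inBall_inter_le (j := j) hgeo (by omega) D hZ
    rw [show j + 1 + 1 = j + 2 from rfl] at hS
    rw [show j + 1 + 2 = j + 3 from rfl, show j + 1 + 1 = j + 2 from rfl, hpow', hpow,
      show 2 * c + 4 - 2 = 2 * c + 2 by omega]
    generalize (if w ∈ D then 1 else 0) = ι at ht hcard ⊢
    generalize ∑ z ∈ Z, (inBall A j z ∩ D).ncard = τ at ht hsum
    generalize ∑ z ∈ Z, (inBall A (j + 1) z).ncard = σ at hS hsum
    have := Nat.mul_le_mul_left (2 * c + 2) ht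
    have := Nat.mul_le_mul_left (2 * c + 3) hcard
    have := Nat.zero_le (c * τ)
    linarith

open Classical in
theorem setOf_adj_eq_and_inBall_eq_univ (hgeo : IsGeodetic A k) (hk : 2 ≤ k)
    (hD : ∀ w ∈ D, 1 ≤ inDeg A w) (hDc : ∀ w ∉ D, 2 ≤ inDeg A w)
    (hcard : Nat.card V = 2 ^ (k + 1) + 1) (hD4 : D.ncard ≤ 4) {x : V} (hx : inDeg A x = 4) :
    {u | A u x} = D ∧ inBall A k x = Set.univ := by
  obtain ⟨j, rfl⟩ : ∃ j, k = j + 2 := ⟨k - 2, by omega⟩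
  obtain ⟨c, hc⟩ : ∃ c, 2 ^ (j + 1) = c + 2 :=
    ⟨2 ^ (j + 1) - 2, by have := Nat.pow_le_pow_right two_pos (Nat.le_add_left 1 j); omega⟩
  have hpow : 2 ^ (j + 2) = 2 * c + 4 := by rw [pow_succ, hc]; ring
  have hpow' : 2 ^ (j + 2 + 1) = 4 * c + 8 := by rw [pow_succ, hpow]; ring
  set N := (Set.toFinite {u | A u x}).toFinset
  have hN : N.card = 4 := by rw [← Set.ncard_eq_toFinset_card, ← hx, inDeg]
  have hNx : ∀ w ∈ N, A w x := fun w hw => by simpa [N] using hw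
  have hbound : ∀ w ∈ N, 2 * c + 4 ≤ 1 + (inBall A (j + 1) w).ncard
      + c * (inBall A j w ∩ D).ncard + (if w ∈ D then 1 else 0) := by
    intro w _
    simpa [hc, hpow] using pow_le_one_add_ncard_inBall hgeo hD hDc (by omega : j + 1 ≤ j + 2) w
  have hsum := Finset.card_nsmul_le_sum _ _ _ hbound
  simp only [Finset.sum_const, smul_eq_mul, Finset.sum_add_distrib, ← Finset.mul_sum,
    Finset.sum_boole, Nat.cast_id, mul_one, hN] at hsum
  have hS := add_sum_ncard_inBall_le (j := j + 1) hgeo le_rfl hNx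
  have hSV := Set.ncard_le_card (inBall A (j + 2) x)
  have ht : ∑ w ∈ N, (inBall A j w ∩ D).ncard ≤ 4 := calc
    _ ≤ _ := (Nat.le_add_left _ _).trans (ite_add_sum_ncard_inBall_inter_le hgeo (by omega) D hNx)
    _ ≤ D.ncard := Set.ncard_le_ncard Set.inter_subset_right
    _ ≤ 4 := hD4
  have hι := Finset.card_filter_le N (· ∈ D)
  have hct := Nat.mul_le_mul_left c ht
  generalize ∑ w ∈ N, (inBall A j w ∩ D).ncard = τ at hsum hct
  generalize ∑ w ∈ N, (inBall A (j + 1) w).ncard = σ at hsum hS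
  constructor
  · refine Set.eq_of_subset_of_ncard_le (fun w hw => ?_) (hD4.trans_eq hx.symm)
    exact Finset.card_filter_eq_iff.1 (by linarith) w (by simpa [N] using hw)
  · refine Set.eq_of_subset_of_ncard_le (Set.subset_univ _) ?_
    rw [Set.ncard_univ]
    linarith

end Digraph

lemma moore_two_add_one (k : ℕ) : moore 2 k + 1 = 2 ^ (k + 1) := by
  have := Nat.one_le_two_pow (n := k + 1)
  rw [moore, Nat.geomSum_eq le_rfl]
  omega

theorem stmt10_general {V : Type*} [Fintype V] (A : V → V → Prop) (k : ℕ) (hk : 2 ≤ k)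
    (hgeo : IsGeodetic A k)
    (hcard : Fintype.card V = moore 2 k + 2)
    (h1 : {v : V | inDeg A v = 1}.ncard = 4)
    (h4 : {v : V | inDeg A v = 4}.ncard = 2)
    (hall : ∀ v : V, inDeg A v = 1 ∨ inDeg A v = 2 ∨ inDeg A v = 4) :
    False := by
  have hcard' : Nat.card V = 2 ^ (k + 1) + 1 := by
    rw [Nat.card_eq_fintype_card, hcard, ← moore_two_add_one]
  have hDc : ∀ w ∉ {v : V | inDeg A v = 1}, 2 ≤ inDeg A w := fun w hw => by
    rcases hall w with h | h | h <;> simp_all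
  have key {x : V} (hx : inDeg A x = 4) :=
    setOf_adj_eq_and_inBall_eq_univ hgeo hk (fun w hw => hw.ge) hDc hcard' h1.le hx
  obtain ⟨v, v', hne, hvv'⟩ := Set.ncard_eq_two.1 h4
  obtain ⟨hNv, hball⟩ := key ((Set.ext_iff.1 hvv' v).2 (by simp))
  obtain ⟨hNv', -⟩ := key ((Set.ext_iff.1 hvv' v').2 (by simp))
  obtain ⟨w, hwv, hv'w⟩ : ∃ w, A w v ∧ v' ∈ inBall A (k - 1) w := by
    have hv' : v' ∈ inBall A (k - 1 + 1) v := by rw [Nat.sub_add_cancel (by omega), hball]; trivial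
    exact (mem_inBall_succ_iff.1 hv').resolve_left hne.symm
  have hwv' : A w v' := (hNv.trans hNv'.symm).subset hwv
  exact notMem_inBall_of_adj hgeo (by omega) hwv' hv'w

/-- There is no `k`-geodetic digraph with minimum out-degree 2, order
`M(2,k)+2`, and in-degree sequence `(1,1,1,1,2,…,2,4,4)` for `k ≥ 2`. -/
theorem stmt10 {V : Type*} [Fintype V] (A : V → V → Prop) (k : ℕ) (hk : 2 ≤ k)
    (hgeo : IsGeodetic A k) (hout : ∀ u : V, 2 ≤ outDeg A u)
    (hcard : Fintype.card V = moore 2 k + 2)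
    (h1 : {v : V | inDeg A v = 1}.ncard = 4)
    (h4 : {v : V | inDeg A v = 4}.ncard = 2)
    (hall : ∀ v : V, inDeg A v = 1 ∨ inDeg A v = 2 ∨ inDeg A v = 4) :
    False :=
  stmt10_general A k hk hgeo hcard h1 h4 hall
end

section
/- For k ≥ 3, there is no k-geodetic digraph with minimum out-degree 2, order M(2,k)+2, and in-degree sequence (1,2,...,2,3): the counting bound |T_{-k}(v')| ≥ 2 + M(2,k-2) + 2M(2,k-1) exceeds the order M(2,k)+2. -/
open Finset

lemma Finset.two_mul_card_le_sum_add_one {ι : Type*} (s : Finset ι) (f : ι → ℕ)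
    (hpos : ∀ a ∈ s, 1 ≤ f a) (hone : #{a ∈ s | f a = 1} ≤ 1) :
    2 * #s ≤ ∑ a ∈ s, f a + 1 := by
  calc 2 * #s = ∑ _a ∈ s, 2 := by rw [sum_const, smul_eq_mul, mul_comm]
    _ ≤ ∑ a ∈ s, (f a + if f a = 1 then 1 else 0) := by
        gcongr with a ha
        have := hpos a ha
        split <;> omega
    _ = ∑ a ∈ s, f a + #{a ∈ s | f a = 1} := by rw [sum_add_distrib, card_filter]
    _ ≤ ∑ a ∈ s, f a + 1 := by omega

lemma two_pow_add_one_le {a : ℕ → ℕ} {k : ℕ} (h1 : 3 ≤ a 1)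
    (hrec : ∀ i, 1 ≤ i → i < k → 2 * a i ≤ a (i + 1) + 1) :
    ∀ i, 1 ≤ i → i ≤ k → 2 ^ i + 1 ≤ a i := by
  intro i hi hik
  induction i, hi using Nat.le_induction with
  | base => simpa using h1
  | succ i hi ih =>
    have := hrec i hi (by omega)
    have := ih (by omega)
    rw [pow_succ]
    omega

lemma moore_two_add_le_sum {a : ℕ → ℕ} {k : ℕ} (h0 : a 0 = 1) (h1 : 3 ≤ a 1)
    (hrec : ∀ i, 1 ≤ i → i < k → 2 * a i ≤ a (i + 1) + 1) :
    moore 2 k + k ≤ ∑ i ∈ range (k + 1), a i := by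
  calc moore 2 k + k = ∑ i ∈ range k, (2 ^ (i + 1) + 1) + 1 := by
        simp only [moore, sum_range_succ', sum_add_distrib, sum_const, card_range, smul_eq_mul,
          mul_one, pow_zero]
        ring
    _ ≤ ∑ i ∈ range k, a (i + 1) + a 0 := by
        gcongr with i hi
        · exact two_pow_add_one_le h1 hrec (i + 1) (by omega) (by simp at hi; omega)
        · exact h0.ge
    _ = ∑ i ∈ range (k + 1), a i := (sum_range_succ' _ _).symm

section WalksInto

variable {V : Type*} [Fintype V] {A : V → V → Prop} [DecidableRel A]

lemma card_filter_cons_isChain {x : V} {t : List V} (h : (x :: t).IsChain A) :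
    #{u | (u :: x :: t).IsChain A} = inDeg A x := by
  simp only [List.isChain_cons_cons, h, and_true, inDeg]
  rw [Set.ncard_eq_toFinset_card', Set.toFinset_ofPred]

variable [DecidableEq V] (A)

/-- The walks of length `i` ending at `v`, as vertex lists; their first vertices form the
`i`-th layer of the in-tree `T_{-k}(v)`. -/
def walksInto (v : V) : ℕ → Finset (List V)
  | 0 => {[v]}
  | i + 1 => (walksInto v i).biUnion fun m => ({u | (u :: m).IsChain A} : Finset V).image (· :: m)

variable {A}

lemma isChain_of_mem_walksInto {v : V} :
    ∀ {i : ℕ} {l : List V}, l ∈ walksInto A v i →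
      l.IsChain A ∧ l.getLast? = some v ∧ l.length = i + 1
  | 0, l, hl => by simp_all [walksInto]
  | i + 1, l, hl => by
    simp only [walksInto, mem_biUnion, mem_image, mem_filter, mem_univ, true_and] at hl
    obtain ⟨m, hm, u, hu, rfl⟩ := hl
    obtain ⟨-, hlast, hlen⟩ := isChain_of_mem_walksInto hm
    obtain ⟨x, t, rfl⟩ := List.exists_cons_of_length_eq_add_one hlen
    simp_all

variable (A)

lemma card_walksInto_zero (v : V) : #(walksInto A v 0) = 1 := rfl

lemma card_walksInto_succ (v : V) (i : ℕ) :
    #(walksInto A v (i + 1)) = ∑ m ∈ walksInto A v i, #{u | (u :: m).IsChain A} := by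
  rw [walksInto, card_biUnion]
  · exact sum_congr rfl fun m _ => card_image_of_injective _ fun _ _ => List.head_eq_of_cons_eq
  · intro m _ m' _ hne
    simp only [Function.onFun, disjoint_left, mem_image]
    rintro _ ⟨u, -, rfl⟩ ⟨u', -, h⟩
    exact hne (List.tail_eq_of_cons_eq h).symm

lemma card_walksInto_one (v : V) : #(walksInto A v 1) = inDeg A v := by
  rw [card_walksInto_succ, walksInto, sum_singleton,
    card_filter_cons_isChain (List.isChain_singleton v)]

variable {A} {k : ℕ}

lemma eq_of_mem_walksInto_of_head?_eq (hA : IsGeodetic A k) {v : V} {i j : ℕ}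
    (hi : i ≤ k) (hj : j ≤ k) {l₁ l₂ : List V} (h₁ : l₁ ∈ walksInto A v i)
    (h₂ : l₂ ∈ walksInto A v j) (h : l₁.head? = l₂.head?) : l₁ = l₂ := by
  obtain ⟨hc₁, hlast₁, hlen₁⟩ := isChain_of_mem_walksInto h₁
  obtain ⟨hc₂, hlast₂, hlen₂⟩ := isChain_of_mem_walksInto h₂
  obtain ⟨x, t, rfl⟩ := List.exists_cons_of_length_eq_add_one hlen₁
  exact hA x v ⟨hc₁, rfl, hlast₁, by omega⟩ ⟨hc₂, h.symm, hlast₂, by omega⟩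

lemma sum_card_walksInto_le_card (hA : IsGeodetic A k) (v : V) :
    ∑ i ∈ range (k + 1), #(walksInto A v i) ≤ Fintype.card V := by
  have hlen {i : ℕ} {l : List V} (h : l ∈ walksInto A v i) : l.length = i + 1 :=
    (isChain_of_mem_walksInto h).2.2
  rw [← card_biUnion fun i _ j _ hne => disjoint_left.mpr fun l h₁ h₂ =>
    hne (by have := hlen h₁; have := hlen h₂; omega)]
  calc _ ≤ #(univ.map (Function.Embedding.some (α := V))) := by
        refine card_le_card_of_injOn List.head? (fun l hl => ?_) fun l₁ h₁ l₂ h₂ h => ?_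
        · simp only [coe_biUnion, coe_range, Set.mem_iUnion, mem_coe] at hl
          obtain ⟨i, -, hl⟩ := hl
          obtain ⟨x, t, rfl⟩ := List.exists_cons_of_length_eq_add_one (hlen hl)
          simp
        · simp only [coe_biUnion, coe_range, Set.mem_iUnion, Set.mem_Iio, mem_coe] at h₁ h₂
          obtain ⟨i, hi, h₁⟩ := h₁
          obtain ⟨j, hj, h₂⟩ := h₂
          exact eq_of_mem_walksInto_of_head?_eq hA (by omega) (by omega) h₁ h₂ h
    _ = Fintype.card V := by simp

lemma two_mul_card_walksInto_le (hA : IsGeodetic A k) (hin : ∀ x, 1 ≤ inDeg A x)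
    (hone : {x | inDeg A x = 1}.Subsingleton) {v : V} {i : ℕ} (hi : i ≤ k) :
    2 * #(walksInto A v i) ≤ #(walksInto A v (i + 1)) + 1 := by
  have hdeg : ∀ m ∈ walksInto A v i,
      ∃ x t, m = x :: t ∧ #{u | (u :: m).IsChain A} = inDeg A x := by
    intro m hm
    obtain ⟨hc, -, hlen⟩ := isChain_of_mem_walksInto hm
    obtain ⟨x, t, rfl⟩ := List.exists_cons_of_length_eq_add_one hlen
    exact ⟨x, t, rfl, card_filter_cons_isChain hc⟩
  rw [card_walksInto_succ]
  refine two_mul_card_le_sum_add_one _ _ (fun m hm => ?_) (card_le_one.mpr fun m hm m' hm' => ?_)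
  · obtain ⟨x, t, -, hx⟩ := hdeg m hm
    exact hx ▸ hin x
  · rw [mem_filter] at hm hm'
    obtain ⟨x, t, rfl, hx⟩ := hdeg _ hm.1
    obtain ⟨x', t', rfl, hx'⟩ := hdeg _ hm'.1
    refine eq_of_mem_walksInto_of_head?_eq hA hi hi hm.1 hm'.1 ?_
    simp only [List.head?_cons, Option.some.injEq]
    exact hone (hx ▸ hm.2 : inDeg A x = 1) (hx' ▸ hm'.2 : inDeg A x' = 1)

end WalksInto

theorem stmt11_general {V : Type*} [Fintype V] (A : V → V → Prop) (k : ℕ) (hk : 3 ≤ k)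
    (hgeo : IsGeodetic A k)
    (hcard : Fintype.card V = moore 2 k + 2)
    (h1 : {v : V | inDeg A v = 1}.ncard = 1)
    (h3 : {v : V | inDeg A v = 3}.ncard = 1)
    (hall : ∀ v : V, inDeg A v = 1 ∨ inDeg A v = 2 ∨ inDeg A v = 3) :
    False := by
  classical
  obtain ⟨v, hv⟩ : ∃ v, inDeg A v = 3 := by
    obtain ⟨v, hv⟩ := Set.ncard_eq_one.mp h3
    exact ⟨v, (hv.symm ▸ Set.mem_singleton v : v ∈ {v : V | inDeg A v = 3})⟩
  have hin : ∀ x, 1 ≤ inDeg A x := fun x => by rcases hall x with h | h | h <;> omega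
  have hone : {x | inDeg A x = 1}.Subsingleton := Set.ncard_le_one_iff_subsingleton.mp h1.le
  have hlower := moore_two_add_le_sum (a := fun i => #(walksInto A v i)) (card_walksInto_zero A v)
    (by simp only [card_walksInto_one, hv, le_refl])
    fun i _ hi => two_mul_card_walksInto_le hgeo hin hone hi.le
  have hupper := sum_card_walksInto_le_card hgeo v
  omega

/-- For `k ≥ 3`, there is no `k`-geodetic digraph with minimum out-degree 2,
order `M(2,k)+2`, and in-degree sequence `(1,2,…,2,3)`. -/
theorem stmt11 {V : Type*} [Fintype V] (A : V → V → Prop) (k : ℕ) (hk : 3 ≤ k)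
    (hgeo : IsGeodetic A k) (hout : ∀ u : V, 2 ≤ outDeg A u)
    (hcard : Fintype.card V = moore 2 k + 2)
    (h1 : {v : V | inDeg A v = 1}.ncard = 1)
    (h3 : {v : V | inDeg A v = 3}.ncard = 1)
    (hall : ∀ v : V, inDeg A v = 1 ∨ inDeg A v = 2 ∨ inDeg A v = 3) :
    False :=
  stmt11_general A k hk hgeo hcard h1 h3 hall
end

section
/- There is no 2-geodetic digraph on 9 vertices with minimum out-degree 2 and in-degree sequence (1,2,2,2,2,2,2,2,3). -/
open Finset

section Walks

variable {V : Type*} {A : V → V → Prop}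

lemma mem_walksUpTo_iff {k : ℕ} {u v : V} {l : List V} :
    l ∈ walksUpTo A k u v ↔
      l.IsChain A ∧ l.head? = some u ∧ l.getLast? = some v ∧ l.length ≤ k + 1 :=
  Iff.rfl

lemma IsGeodetic.not_adj_self (hgeo : IsGeodetic A 2) (u : V) : ¬A u u := fun h => by
  simpa using hgeo u u (show [u, u] ∈ _ by simp [mem_walksUpTo_iff, h])
    (show [u] ∈ _ by simp [mem_walksUpTo_iff])

lemma IsGeodetic.not_adj_of_adj (hgeo : IsGeodetic A 2) {u v : V} (huv : A u v) : ¬A v u :=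
  fun hvu => by
    simpa using hgeo u u (show [u, v, u] ∈ _ by simp [mem_walksUpTo_iff, huv, hvu])
      (show [u] ∈ _ by simp [mem_walksUpTo_iff])

lemma IsGeodetic.not_adj_of_adj_of_adj (hgeo : IsGeodetic A 2) {u w v : V} (huw : A u w)
    (hwv : A w v) : ¬A u v := fun huv => by
  simpa using hgeo u v (show [u, w, v] ∈ _ by simp [mem_walksUpTo_iff, huw, hwv])
    (show [u, v] ∈ _ by simp [mem_walksUpTo_iff, huv])

lemma IsGeodetic.eq_of_adj_of_adj (hgeo : IsGeodetic A 2) {u w w' v : V} (huw : A u w)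
    (hwv : A w v) (huw' : A u w') (hw'v : A w' v) : w = w' := by
  simpa using hgeo u v (show [u, w, v] ∈ _ by simp [mem_walksUpTo_iff, huw, hwv])
    (show [u, w', v] ∈ _ by simp [mem_walksUpTo_iff, huw', hw'v])

end Walks

section Degrees

variable {V : Type*} [Fintype V] {A : V → V → Prop}

open scoped Classical in
noncomputable def inNbrs (A : V → V → Prop) (v : V) : Finset V := {u | A u v}

@[simp]
lemma mem_inNbrs {u v : V} : u ∈ inNbrs A v ↔ A u v := by
  simp [inNbrs]

lemma card_inNbrs (v : V) : #(inNbrs A v) = inDeg A v := by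
  rw [inDeg, ← Set.ncard_coe_finset]
  congr 1
  ext u
  simp

lemma sum_outDeg_eq_sum_inDeg : ∑ u, outDeg A u = ∑ v, inDeg A v := by
  classical
  simp only [outDeg, inDeg, Set.ncard_eq_toFinset_card', Set.toFinset_ofPred, card_filter]
  exact sum_comm

lemma outDeg_eq_of_sum_inDeg_eq {d : ℕ} (hout : ∀ u, d ≤ outDeg A u)
    (hsum : ∑ v, inDeg A v = d * Fintype.card V) (u : V) : outDeg A u = d := by
  have hsum' : ∑ _u : V, d = ∑ u, outDeg A u := by
    rw [sum_outDeg_eq_sum_inDeg, hsum, sum_const, card_univ, smul_eq_mul, mul_comm]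
  exact ((sum_eq_sum_iff_of_le fun u _ => hout u).1 hsum' u (mem_univ u)).symm

lemma three_le_outDeg {u v₁ v₂ v₃ : V} (h₁ : A u v₁) (h₂ : A u v₂) (h₃ : A u v₃)
    (h₁₂ : v₁ ≠ v₂) (h₁₃ : v₁ ≠ v₃) (h₂₃ : v₂ ≠ v₃) : 3 ≤ outDeg A u :=
  (Set.two_lt_ncard_iff (Set.toFinite _)).2 ⟨v₁, v₂, v₃, h₁, h₂, h₃, h₁₂, h₁₃, h₂₃⟩

lemma eq_of_adj_of_outDeg_le_two {B : V → Prop} {t w x y : V} (hout : outDeg A t ≤ 2)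
    (htw : A t w) (hw : B w) (htx : A t x) (hty : A t y) (hx : ¬B x) (hy : ¬B y) : x = y := by
  by_contra hxy
  have := three_le_outDeg htw htx hty (by rintro rfl; exact hx hw) (by rintro rfl; exact hy hw) hxy
  omega

end Degrees

section InBall

variable {V : Type*} [Fintype V] [DecidableEq V] {A : V → V → Prop}

noncomputable def inBallTwo (A : V → V → Prop) (z : V) : Finset V :=
  insert z (inNbrs A z ∪ (inNbrs A z).biUnion (inNbrs A))

lemma mem_inBallTwo {v z : V} : v ∈ inBallTwo A z ↔ v = z ∨ A v z ∨ ∃ w, A v w ∧ A w z := by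
  simp [inBallTwo, and_comm]

lemma IsGeodetic.card_inBallTwo (hgeo : IsGeodetic A 2) (z : V) :
    #(inBallTwo A z) = 1 + inDeg A z + ∑ w ∈ inNbrs A z, inDeg A w := by
  have hz : z ∉ inNbrs A z ∪ (inNbrs A z).biUnion (inNbrs A) := by
    simp only [mem_union, mem_biUnion, mem_inNbrs, not_or, not_exists, not_and]
    exact ⟨hgeo.not_adj_self z, fun w hwz hzw => hgeo.not_adj_of_adj hzw hwz⟩
  have hdisj : Disjoint (inNbrs A z) ((inNbrs A z).biUnion (inNbrs A)) := by
    simp only [disjoint_left, mem_biUnion, mem_inNbrs]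
    exact fun u huz ⟨w, hwz, huw⟩ => hgeo.not_adj_of_adj_of_adj huw hwz huz
  have hpair : (inNbrs A z : Set V).PairwiseDisjoint (inNbrs A) := by
    intro w hw w' hw' hne
    simp only [Function.onFun, disjoint_left, mem_inNbrs]
    exact fun u huw huw' =>
      hne (hgeo.eq_of_adj_of_adj huw (mem_inNbrs.1 hw) huw' (mem_inNbrs.1 hw'))
  rw [inBallTwo, card_insert_of_notMem hz, card_union_of_disjoint hdisj, card_biUnion hpair,
    card_inNbrs]
  simp only [card_inNbrs]
  ring

lemma IsGeodetic.one_add_inDeg_add_sum_inDeg_le (hgeo : IsGeodetic A 2) (z : V) :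
    1 + inDeg A z + ∑ w ∈ inNbrs A z, inDeg A w ≤ Fintype.card V :=
  hgeo.card_inBallTwo z ▸ card_le_univ _

lemma IsGeodetic.inBallTwo_eq_univ_of_card_eq (hgeo : IsGeodetic A 2) {z : V}
    (hcard : 1 + inDeg A z + ∑ w ∈ inNbrs A z, inDeg A w = Fintype.card V) :
    inBallTwo A z = univ :=
  eq_univ_of_card _ (hgeo.card_inBallTwo z ▸ hcard)

end InBall

lemma sum_add_ite_mem_eq {α : Type*} [DecidableEq α] {f : α → ℕ} {x y : α} (s : Finset α)
    (hxy : x ≠ y) (hx : f x = 1) (hy : f y = 3) (hf : ∀ v, v ≠ x → v ≠ y → f v = 2) :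
    ∑ v ∈ s, f v + (if x ∈ s then 1 else 0) = 2 * #s + (if y ∈ s then 1 else 0) := by
  have hpt : ∀ v, f v + (if x = v then 1 else 0) = 2 + (if y = v then 1 else 0) := by
    intro v
    by_cases hvx : v = x
    · subst hvx; simp [hx, Ne.symm hxy]
    by_cases hvy : v = y
    · subst hvy; simp [hy, hxy]
    simp [hf v hvx hvy, Ne.symm hvx, Ne.symm hvy]
  calc ∑ v ∈ s, f v + (if x ∈ s then 1 else 0)
      = ∑ v ∈ s, (f v + if x = v then 1 else 0) := by rw [sum_add_distrib, sum_ite_eq]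
    _ = ∑ v ∈ s, (2 + if y = v then 1 else 0) := sum_congr rfl fun v _ => hpt v
    _ = 2 * #s + (if y ∈ s then 1 else 0) := by
      rw [sum_add_distrib, sum_ite_eq, sum_const, smul_eq_mul, mul_comm]

section Configuration

variable {V : Type*} [Fintype V] [DecidableEq V] {A : V → V → Prop} {z : V}

lemma eq_of_adj_of_inBallTwo_eq_univ (hout : ∀ u, outDeg A u ≤ 2) (hball : inBallTwo A z = univ)
    {t x y : V} (htz : t ≠ z) (ht : ¬A t z) (htx : A t x) (hty : A t y) (hx : ¬A x z)
    (hy : ¬A y z) : x = y := by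
  obtain ⟨w, htw, hwz⟩ :=
    ((mem_inBallTwo.1 (hball ▸ mem_univ t)).resolve_left htz).resolve_left ht
  exact eq_of_adj_of_outDeg_le_two (B := (A · z)) (hout t) htw hwz htx hty hx hy

lemma IsGeodetic.inNbrs_avoid_of_inBallTwo_eq_univ (hgeo : IsGeodetic A 2)
    (hout : ∀ u, outDeg A u ≤ 2) (hball : inBallTwo A z = univ) {x t x' t' u : V}
    (hzx : A z x) (htx : A t x) (htz : t ≠ z) (hzx' : A z x') (ht'x' : A t' x') (ht'z : t' ≠ z)
    (hut : A u t) : u ≠ t ∧ u ≠ t' ∧ u ≠ z ∧ ¬A u z := by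
  refine ⟨?_, ?_, ?_, fun huz => htz (hgeo.eq_of_adj_of_adj huz hzx hut htx).symm⟩
  · rintro rfl
    exact hgeo.not_adj_self u hut
  · rintro rfl
    have htx' : t = x' := eq_of_adj_of_inBallTwo_eq_univ hout hball ht'z
      (fun h => hgeo.not_adj_of_adj_of_adj h hzx' ht'x') hut ht'x'
      (fun h => hgeo.not_adj_of_adj_of_adj h hzx htx) (hgeo.not_adj_of_adj hzx')
    exact hgeo.not_adj_of_adj_of_adj (htx' ▸ hzx') htx hzx
  · rintro rfl
    exact hgeo.not_adj_of_adj_of_adj hut htx hzx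

theorem IsGeodetic.false_of_inBallTwo_eq_univ (hgeo : IsGeodetic A 2)
    (hcard : Fintype.card V = 9) (hout : ∀ u, outDeg A u = 2) (hz : inDeg A z = 3)
    (hball : inBallTwo A z = univ) (hin : ∀ v, v ≠ z → ¬A v z → inDeg A v = 2) : False := by
  have hout' (u : V) : outDeg A u ≤ 2 := (hout u).le
  have second_inNbr : ∀ {x}, A z x → ∃ t, A t x ∧ t ≠ z := fun {x} hzx =>
    Set.exists_ne_of_one_lt_ncard (show 1 < inDeg A x by
      rw [hin x (by rintro rfl; exact hgeo.not_adj_self x hzx) (hgeo.not_adj_of_adj hzx)]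
      omega) z
  obtain ⟨a, b, hza, hzb, hab⟩ := (Set.one_lt_ncard_iff (Set.toFinite _)).1
    (show 1 < outDeg A z by rw [hout z]; omega)
  obtain ⟨ta, hta, htaz⟩ := second_inNbr hza
  obtain ⟨tb, htb, htbz⟩ := second_inNbr hzb
  have hta_z : ¬A ta z := fun h => hgeo.not_adj_of_adj_of_adj h hza hta
  have htb_z : ¬A tb z := fun h => hgeo.not_adj_of_adj_of_adj h hzb htb
  have htatb : ta ≠ tb := by
    rintro rfl
    exact hab (eq_of_adj_of_inBallTwo_eq_univ hout' hball htaz hta_z hta htb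
      (hgeo.not_adj_of_adj hza) (hgeo.not_adj_of_adj hzb))
  set T := insert ta (insert tb (insert z (inNbrs A z)))
  have hT : #T = 6 := by
    rw [card_insert_of_notMem (by simp [htatb, htaz, hta_z]),
      card_insert_of_notMem (by simp [htbz, htb_z]),
      card_insert_of_notMem (by simpa using hgeo.not_adj_self z), card_inNbrs, hz]
  have hsub : ∀ {t}, (∀ u, A u t → u ≠ ta ∧ u ≠ tb ∧ u ≠ z ∧ ¬A u z) →
      inNbrs A t ⊆ univ \ T := fun h u hu => by
    simpa [T] using h u (mem_inNbrs.1 hu)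
  have hsub_a := hsub fun u =>
    hgeo.inNbrs_avoid_of_inBallTwo_eq_univ hout' hball hza hta htaz hzb htb htbz
  have hsub_b := hsub fun u hu => by
    obtain ⟨h₁, h₂, h₃, h₄⟩ :=
      hgeo.inNbrs_avoid_of_inBallTwo_eq_univ hout' hball hzb htb htbz hza hta htaz hu
    exact ⟨h₂, h₁, h₃, h₄⟩
  obtain ⟨e, hea, heb⟩ := not_disjoint_iff.1 fun hdisj => by
    have := card_le_card (union_subset hsub_a hsub_b)
    rw [card_union_of_disjoint hdisj, card_univ_sdiff, hT, hcard, card_inNbrs, card_inNbrs,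
      hin ta htaz hta_z, hin tb htbz htb_z] at this
    omega
  obtain ⟨-, -, hez, he_z⟩ := hgeo.inNbrs_avoid_of_inBallTwo_eq_univ hout' hball hza hta htaz
    hzb htb htbz (mem_inNbrs.1 hea)
  exact htatb (eq_of_adj_of_inBallTwo_eq_univ hout' hball hez he_z (mem_inNbrs.1 hea)
    (mem_inNbrs.1 heb) hta_z htb_z)

end Configuration

/-- There is no 2-geodetic digraph on 9 vertices with minimum out-degree 2
and in-degree sequence `(1,2,2,2,2,2,2,2,3)`. -/
theorem stmt12 {V : Type*} [Fintype V] (A : V → V → Prop)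
    (hgeo : IsGeodetic A 2) (hout : ∀ u : V, 2 ≤ outDeg A u)
    (hcard : Fintype.card V = 9)
    (h1 : {v : V | inDeg A v = 1}.ncard = 1)
    (h3 : {v : V | inDeg A v = 3}.ncard = 1)
    (hall : ∀ v : V, inDeg A v = 1 ∨ inDeg A v = 2 ∨ inDeg A v = 3) :
    False := by
  classical
  obtain ⟨x, hx⟩ := Set.ncard_eq_one.1 h1
  obtain ⟨z, hz⟩ := Set.ncard_eq_one.1 h3
  have hx' (v : V) : inDeg A v = 1 ↔ v = x := by simpa using Set.ext_iff.1 hx v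
  have hz' (v : V) : inDeg A v = 3 ↔ v = z := by simpa using Set.ext_iff.1 hz v
  have hxz : x ≠ z := by rintro rfl; have := (hx' x).2 rfl; rw [(hz' x).2 rfl] at this; omega
  have hzdeg : inDeg A z = 3 := (hz' z).2 rfl
  have hdeg (v : V) (hvx : v ≠ x) (hvz : v ≠ z) : inDeg A v = 2 := by
    rcases hall v with h | h | h
    exacts [(hvx ((hx' v).1 h)).elim, h, (hvz ((hz' v).1 h)).elim]
  have hsum (s : Finset V) := sum_add_ite_mem_eq s hxz ((hx' x).2 rfl) hzdeg hdeg
  have hout2 := outDeg_eq_of_sum_inDeg_eq hout (by simpa [hcard] using hsum univ)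
  have hsumz := hsum (inNbrs A z)
  have hle := hgeo.one_add_inDeg_add_sum_inDeg_le z
  have hzz : z ∉ inNbrs A z := by simpa using hgeo.not_adj_self z
  -- `x` is an in-neighbour of `z`, otherwise the in-ball of `z` would have 10 vertices
  have hxz' : x ∈ inNbrs A z := by
    by_contra h
    simp only [if_neg h, if_neg hzz, card_inNbrs, hzdeg] at hsumz hle
    omega
  simp only [if_pos hxz', if_neg hzz, card_inNbrs, hzdeg] at hsumz hle
  refine hgeo.false_of_inBallTwo_eq_univ hcard hout2 hzdeg
    (hgeo.inBallTwo_eq_univ_of_card_eq (by rw [hzdeg, hcard]; omega)) fun v hvz hv => hdeg v ?_ hvz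
  rintro rfl
  exact hv (mem_inNbrs.1 hxz')
end

section
/- If there exists a k-geodetic digraph with minimum out-degree at least d and order M(d,k)+ε containing a vertex of in-degree at least d, then for any 0 ≤ r ≤ d there exists a non-diregular k-geodetic digraph with minimum out-degree at least d, order M(d,k)+ε+1, and a vertex of in-degree at most d−r (the vertex-splitting construction: add a new vertex w with N^+(w) = N^+(u) and redirect d−r arcs into u to go into w instead). -/
section Walks

variable {V W : Type*} {A : V → V → Prop} {B : W → W → Prop} {k : ℕ}

theorem map_mem_walksUpTo (f : V → W) (hf : ∀ a b, A a b → B (f a) (f b)) {x y : V}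
    {l : List V} (hl : l ∈ walksUpTo A k x y) : l.map f ∈ walksUpTo B k (f x) (f y) := by
  obtain ⟨hc, hx, hy, hn⟩ := hl
  exact ⟨List.isChain_map_of_isChain f hf hc, by simp [hx], by simp [hy], by simpa using hn⟩

theorem List.IsChain.eq_of_map_eq (f : V → W)
    (hinj : ∀ a a' b b', A a b → A a' b' → f b = f b' → b = b') :
    ∀ {l₁ l₂ : List V}, l₁.IsChain A → l₂.IsChain A → l₁.head? = l₂.head? →
      l₁.map f = l₂.map f → l₁ = l₂
  | [], [], _, _, _, _ => rfl
  | [_], [_], _, _, hh, _ => by simpa using hh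
  | a :: b :: t, a' :: b' :: t', h₁, h₂, hh, h => by
    rw [List.isChain_cons_cons] at h₁ h₂
    obtain rfl : a = a' := by simpa using hh
    simp only [List.map_cons, List.cons.injEq] at h
    obtain rfl : b = b' := hinj _ _ _ _ h₁.1 h₂.1 h.2.1
    rw [eq_of_map_eq f hinj h₁.2 h₂.2 rfl (by simp [h.2.2])]
  | [], _ :: _, _, _, _, h | _ :: _, [], _, _, _, h | [_], _ :: _ :: _, _, _, _, h
  | _ :: _ :: _, [_], _, _, _, h => by simp at h

theorem IsGeodetic.of_hom (f : V → W) (hf : ∀ a b, A a b → B (f a) (f b))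
    (hinj : ∀ a a' b b', A a b → A a' b' → f b = f b' → b = b') (hB : IsGeodetic B k) :
    IsGeodetic A k := fun x y _ h₁ _ h₂ =>
  List.IsChain.eq_of_map_eq f hinj h₁.1 h₂.1 (h₁.2.1.trans h₂.2.1.symm)
    (hB (f x) (f y) (map_mem_walksUpTo f hf h₁) (map_mem_walksUpTo f hf h₂))

theorem isGeodetic_of_not_rel_rel (h : ∀ a b c, A a b → ¬ A b c) : IsGeodetic A k := by
  have walk : ∀ {x y l}, l ∈ walksUpTo A k x y → l = [x, y] ∧ A x y ∨ l = [x] ∧ ¬ A x y := by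
    rintro x y (_ | ⟨a, _ | ⟨b, _ | ⟨c, t⟩⟩⟩) ⟨hc, hx, hy, -⟩
    · simp at hx
    · simp only [List.head?_cons, List.getLast?_singleton, Option.some_inj] at hx hy
      subst hx hy
      exact .inr ⟨rfl, fun hxx => h _ _ _ hxx hxx⟩
    · simp only [List.head?_cons, List.getLast?_cons_cons, List.getLast?_singleton,
        Option.some_inj] at hx hy
      subst hx hy
      exact .inl ⟨rfl, List.isChain_pair.mp hc⟩
    · obtain ⟨hab, hbc⟩ := List.isChain_cons_cons.mp hc
      exact (h _ _ _ hab (List.isChain_cons_cons.mp hbc).1).elim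
  intro x y l₁ h₁ l₂ h₂
  rcases walk h₁ with ⟨rfl, hxy⟩ | ⟨rfl, hxy⟩ <;> rcases walk h₂ with ⟨rfl, hxy'⟩ | ⟨rfl, hxy'⟩
  all_goals first | rfl | contradiction

end Walks

section AddSource

variable {V : Type*} {A : V → V → Prop} {S : V → Prop} {k : ℕ}

variable (A S) in
def addSource : Option V → Option V → Prop
  | some a, some b => A a b
  | none, some b => S b
  | _, none => False

theorem not_addSource_none (x : Option V) : ¬ addSource A S x none := by
  cases x <;> exact id

theorem outDeg_addSource_some (a : V) : outDeg (addSource A S) (some a) = outDeg A a := by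
  have : {y | addSource A S (some a) y} = some '' {b | A a b} := by
    ext (_ | b) <;> simp [addSource]
  rw [outDeg, this, Set.ncard_image_of_injective _ (Option.some_injective V), outDeg]

theorem outDeg_addSource_none : outDeg (addSource A S) none = {b | S b}.ncard := by
  have : {y | addSource A S none y} = some '' {b | S b} := by
    ext (_ | b) <;> simp [addSource]
  rw [outDeg, this, Set.ncard_image_of_injective _ (Option.some_injective V)]

theorem inDeg_addSource_none : inDeg (addSource A S) none = 0 := by
  have : {x | addSource A S x none} = ∅ := by
    ext (_ | a) <;> simp [addSource]
  rw [inDeg, this, Set.ncard_empty]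

theorem IsGeodetic.addSource_outNeighbors (hA : IsGeodetic A k) (u : V) :
    IsGeodetic (addSource A (A u)) k := by
  refine hA.of_hom (·.getD u) ?_ ?_
  · rintro a (_ | b) h
    · exact absurd h (not_addSource_none a)
    · cases a <;> exact h
  · rintro a a' (_ | b) (_ | b') h h' hb
    exacts [rfl, absurd h (not_addSource_none a), absurd h' (not_addSource_none a'),
      congrArg some hb]

theorem isGeodetic_addSource_false : IsGeodetic (addSource (fun _ _ : V => False) S) k :=
  isGeodetic_of_not_rel_rel fun
    | _, some _, some _, _, h => h
    | _, _, none, _, h => not_addSource_none _ h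
    | a, none, _, h, _ => not_addSource_none a h

end AddSource

theorem stmt19_general (d k ε r : ℕ)
    (h : ∃ (V : Type) (_ : Fintype V) (A : V → V → Prop),
      IsGeodetic A k ∧ (∀ u : V, d ≤ outDeg A u) ∧
      Fintype.card V = moore d k + ε ∧ ∃ u : V, d ≤ inDeg A u) :
    ∃ (W : Type) (_ : Fintype W) (B : W → W → Prop),
      IsGeodetic B k ∧ (∀ w : W, d ≤ outDeg B w) ∧
      Fintype.card W = moore d k + ε + 1 ∧
      (¬ ∀ w : W, inDeg B w = d ∧ outDeg B w = d) ∧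
      (∃ w : W, inDeg B w ≤ d - r) := by
  obtain ⟨V, _, A, hA, hout, hcard, u, -⟩ := h
  have hcard' : Fintype.card (Option V) = moore d k + ε + 1 := by rw [Fintype.card_option, hcard]
  rcases Nat.eq_zero_or_pos d with rfl | hd
  · refine ⟨Option V, inferInstance, addSource (fun _ _ => False) (· = u),
      isGeodetic_addSource_false, fun _ => Nat.zero_le _, hcard', fun hreg => ?_,
      none, inDeg_addSource_none.trans_le (Nat.zero_le _)⟩
    have hout_none := (hreg none).2
    rw [outDeg_addSource_none, Set.ofPred_eq_eq_singleton, Set.ncard_singleton] at hout_none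
    exact one_ne_zero hout_none
  · refine ⟨Option V, inferInstance, addSource A (A u), hA.addSource_outNeighbors u, ?_, hcard',
      fun hreg => hd.ne (inDeg_addSource_none ▸ (hreg none).1), none,
      inDeg_addSource_none.trans_le (Nat.zero_le _)⟩
    rintro (_ | a)
    · rw [outDeg_addSource_none]; exact hout u
    · rw [outDeg_addSource_some]; exact hout a

/-- vertex-splitting construction: If there exists a `k`-geodetic digraph
with minimum out-degree at least `d`, order `M(d,k)+ε`, and a vertex of in-degree at least
`d`, then for any `0 ≤ r ≤ d` there exists a non-diregular `k`-geodetic digraph with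
minimum out-degree at least `d`, order `M(d,k)+ε+1`, and a vertex of in-degree at most
`d − r`. -/
theorem stmt19 (d k ε r : ℕ) (hr : r ≤ d)
    (h : ∃ (V : Type) (_ : Fintype V) (A : V → V → Prop),
      IsGeodetic A k ∧ (∀ u : V, d ≤ outDeg A u) ∧
      Fintype.card V = moore d k + ε ∧ ∃ u : V, d ≤ inDeg A u) :
    ∃ (W : Type) (_ : Fintype W) (B : W → W → Prop),
      IsGeodetic B k ∧ (∀ w : W, d ≤ outDeg B w) ∧
      Fintype.card W = moore d k + ε + 1 ∧
      (¬ ∀ w : W, inDeg B w = d ∧ outDeg B w = d) ∧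
      (∃ w : W, inDeg B w ≤ d - r) :=
  stmt19_general d k ε r h
end
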